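/- Let T be a rooted binary phylogenetic X-tree whose positive edge lengths satisfy the ultrametric condition, with |X| = n, and let k be a branching value of T. Then n − k + 1 ≤ m(T,k) ≤ (n/k)^k, where m(T,k) is the number of size-k maxPD sets of T. -/

import Mathlib

/-!
Rooted phylogenetic `X`-trees with positive edge lengths.

A tree on a finite vertex type `V` is encoded by its parent function: the root
has no parent, every other vertex has one, and iterating the parent function
reaches the root.  The edge into a non-root vertex `v` has length `len v`, and
`hgt v` is the distance from the root to `v`.  Leaves are the vertices with no
children; the taxon set `X` of the paper is the set `leaves` of leaves.
Every non-leaf, non-root vertex has out-degree (number of children) at least 2.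
-/

noncomputable section

attribute [local instance] Classical.propDecidable

structure PhyloTree (V : Type) [Fintype V] [DecidableEq V] where
  root : V
  parent : V → Option V
  len : V → ℝ
  hgt : V → ℝ
  parent_root : parent root = none
  parent_isSome : ∀ v, v ≠ root → (parent v).isSome
  reaches_root : ∀ v, Relation.ReflTransGen (fun a b => parent a = some b) v root
  hgt_root : hgt root = 0
  hgt_eq : ∀ v u, parent v = some u → hgt v = hgt u + len v
  len_pos : ∀ v, v ≠ root → 0 < len v
  outdeg_ge_two : ∀ v, v ≠ root → (∃ u, parent u = some v) →
    2 ≤ Set.ncard {u | parent u = some v}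

namespace PhyloTree

variable {V : Type} [Fintype V] [DecidableEq V]

/-- `T.step a b` : `b` is the parent of `a`. -/
def step (T : PhyloTree V) (a b : V) : Prop := T.parent a = some b

/-- `T.anc u v` : `u` is an ancestor of `v`, i.e. `u` lies on the (unique) path
from the root to `v` (reflexively). -/
def anc (T : PhyloTree V) (u v : V) : Prop := Relation.ReflTransGen T.step v u

/-- a leaf is a vertex with no children. -/
def IsLeaf (T : PhyloTree V) (v : V) : Prop := ∀ u, T.parent u ≠ some v

/-- the leaf set (the taxon set `X`). -/
def leaves (T : PhyloTree V) : Set V := {v | T.IsLeaf v}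

/-- Phylogenetic diversity of a set `Y`: the total length of all edges `e`
whose set of descendant leaves meets `Y` (the edge into a non-root vertex `v`
has length `T.len v`). -/
def PD (T : PhyloTree V) (Y : Set V) : ℝ :=
  ∑ v : V, if v ≠ T.root ∧ ∃ x ∈ Y, T.IsLeaf x ∧ T.anc v x then T.len v else 0

/-- the ultrametric condition: all leaves are at the same distance from the root. -/
def Ultrametric (T : PhyloTree V) : Prop :=
  ∀ x y, T.IsLeaf x → T.IsLeaf y → T.hgt x = T.hgt y

/-- `R d`: the set of vertices within distance `d` above some leaf. -/
def R (T : PhyloTree V) (d : ℝ) : Set V :=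
  {v | ∃ x, T.IsLeaf x ∧ T.anc v x ∧ T.hgt x - T.hgt v ≤ d}

/-- adjacency in the forest induced by `T` on a vertex set `S`. -/
def adjIn (T : PhyloTree V) (S : Set V) (u v : V) : Prop :=
  u ∈ S ∧ v ∈ S ∧ (T.parent u = some v ∨ T.parent v = some u)

/-- the connected components of the forest induced by `T` on `S`. -/
def components (T : PhyloTree V) (S : Set V) : Set (Set V) :=
  {C | ∃ v ∈ S, C = S ∩ {u | Relation.ReflTransGen (T.adjIn S) v u}}

/-- `c d`: the number of connected components of the forest `T[R(d)]`. -/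
def ccount (T : PhyloTree V) (d : ℝ) : ℕ := (T.components (T.R d)).ncard

/-- `k` is a branching value if `T[R(d)]` has exactly `k` components for some `d ≥ 0`. -/
def IsBranchingValue (T : PhyloTree V) (k : ℕ) : Prop := ∃ d : ℝ, 0 ≤ d ∧ T.ccount d = k

/-- the branching distance `d_k = min {d : c(d) = k}`. -/
def branchDist (T : PhyloTree V) (k : ℕ) : ℝ := sInf {d | 0 ≤ d ∧ T.ccount d = k}

/-- `k⁻`: the largest branching value `≤ k`. -/
def kminus (T : PhyloTree V) (k : ℕ) : ℕ := sSup {j | j ≤ k ∧ T.IsBranchingValue j}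

/-- `k⁺`: the smallest branching value `≥ k`. -/
def kplus (T : PhyloTree V) (k : ℕ) : ℕ := sInf {j | k ≤ j ∧ T.IsBranchingValue j}

/-- `A` is a size-`k` maxPD set. -/
def IsMaxPD (T : PhyloTree V) (k : ℕ) (A : Set V) : Prop :=
  A ⊆ T.leaves ∧ A.ncard = k ∧ ∀ Y ⊆ T.leaves, Y.ncard = k → T.PD Y ≤ T.PD A

/-- `A` is a size-`k` minPD set. -/
def IsMinPD (T : PhyloTree V) (k : ℕ) (A : Set V) : Prop :=
  A ⊆ T.leaves ∧ A.ncard = k ∧ ∀ Y ⊆ T.leaves, Y.ncard = k → T.PD A ≤ T.PD Y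

/-- `m T k`: the number of size-`k` maxPD sets of `T`. -/
def m (T : PhyloTree V) (k : ℕ) : ℕ := {A : Set V | T.IsMaxPD k A}.ncard

/-- `T` is binary: every non-leaf vertex has exactly two children. -/
def Binary (T : PhyloTree V) : Prop :=
  ∀ v, ¬ T.IsLeaf v → Set.ncard {u | T.parent u = some v} = 2

end PhyloTree

/-!
Fix `d ≥ 0` with `c(d) = k`. Each component of `T[R(d)]` consists of the descendants in `R(d)`
of its top vertex, so the leaves split into `k` clusters, one below each top. If a size-`k` set
of leaves misses a cluster, it has two leaves `a, a'` in another one; trading `a'` for a leaf `x`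
of the missed cluster loses at most `d` (the path from `a'` up to its top) and gains more than `d`
(the path from `x` up to the parent of its top, which lies outside `R(d)`). So the maxPD sets are
among the transversals of the clusters, and all transversals have the same PD: above the cut they
cover every edge, and below it, for each top, a path whose length depends only on the top, by the
ultrametric condition. Hence `m(T,k) = n₁ ⋯ n_k` for the cluster sizes `nᵢ ≥ 1` with
`n₁ + ⋯ + n_k = n`, and both bounds are elementary inequalities (the upper one is AM–GM).
-/

open Finset

theorem Finset.sum_add_one_le_prod_add_card {ι : Type*} (s : Finset ι) (f : ι → ℕ)
    (hf : ∀ i ∈ s, 1 ≤ f i) : ∑ i ∈ s, f i + 1 ≤ ∏ i ∈ s, f i + #s := by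
  classical
  induction s using Finset.induction_on with
  | empty => simp
  | insert a s ha ih =>
    have hfa : 1 ≤ f a := hf a (mem_insert_self a s)
    have hs : ∀ i ∈ s, 1 ≤ f i := fun i hi => hf i (mem_insert_of_mem hi)
    have hprod : 1 ≤ ∏ i ∈ s, f i := one_le_prod' hs
    rw [sum_insert ha, prod_insert ha, card_insert_of_notMem ha]
    nlinarith [ih hs]

theorem Real.prod_le_sum_div_card_pow {ι : Type*} (s : Finset ι) (f : ι → ℝ)
    (hf : ∀ i ∈ s, 0 ≤ f i) : ∏ i ∈ s, f i ≤ ((∑ i ∈ s, f i) / #s) ^ #s := by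
  rcases s.eq_empty_or_nonempty with rfl | hs
  · simp
  have hcard : (0 : ℝ) < #s := by exact_mod_cast hs.card_pos
  have amgm := Real.geom_mean_le_arith_mean s (fun _ => 1) f (fun _ _ => zero_le_one)
    (by simpa using hcard) hf
  simp only [Real.rpow_one, sum_const, nsmul_eq_mul, mul_one, one_mul] at amgm
  calc ∏ i ∈ s, f i = ((∏ i ∈ s, f i) ^ ((#s : ℝ)⁻¹)) ^ #s :=
        (Real.rpow_inv_natCast_pow (prod_nonneg hf) hs.card_pos.ne').symm
    _ ≤ ((∑ i ∈ s, f i) / #s) ^ #s :=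
        pow_le_pow_left₀ (Real.rpow_nonneg (prod_nonneg hf) _) amgm _

theorem Set.injOn_iff_surjOn_of_ncard_eq {α β : Type*} {f : α → β} {A : Set α} {B : Set β}
    (hA : A.Finite) (hB : B.Finite) (hf : Set.MapsTo f A B) (hcard : A.ncard = B.ncard) :
    Set.InjOn f A ↔ Set.SurjOn f A B := by
  constructor
  · intro hinj
    have himage : f '' A = B := Set.eq_of_subset_of_ncard_le hf.image_subset
      (by rw [hinj.ncard_image, hcard]) hB
    exact himage.symm.subset
  · intro hsurj
    refine Set.injOn_of_ncard_image_eq ?_ hA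
    rw [hsurj.image_eq_of_mapsTo hf, hcard]

theorem Set.ncard_setOf_bijOn {α β : Type*} [DecidableEq β] (f : α → β) (L : Finset α)
    (B : Finset β) :
    {A : Set α | A ⊆ L ∧ Set.BijOn f A B}.ncard = ∏ b ∈ B, #{x ∈ L | f x = b} := by
  set S := Fintype.piFinset fun b : B => {x ∈ L | f x = b}
  have hS : ∀ g, g ∈ S ↔ ∀ b, g b ∈ L ∧ f (g b) = b := by simp [S]
  have himage :
      {A : Set α | A ⊆ L ∧ Set.BijOn f A B} = (fun g => Set.range g) '' (S : Set (B → α)) := by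
    ext A
    constructor
    · rintro ⟨hAL, hA⟩
      choose g hgA hgf using fun b : B => hA.surjOn b.2
      refine ⟨g, (hS g).2 fun b => ⟨hAL (hgA b), hgf b⟩, ?_⟩
      refine (Set.range_subset_iff.2 hgA).antisymm fun a ha => ?_
      exact ⟨⟨f a, hA.mapsTo ha⟩, hA.injOn (hgA _) ha (hgf _)⟩
    · rintro ⟨g, hg, rfl⟩
      rw [Finset.mem_coe, hS] at hg
      refine ⟨Set.range_subset_iff.2 fun b => (hg b).1, ?_, ?_, ?_⟩
      · rintro _ ⟨b, rfl⟩
        simp [(hg b).2]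
      · rintro _ ⟨b, rfl⟩ _ ⟨b', rfl⟩ h
        have : b = b' := Subtype.ext (by rw [← (hg b).2, ← (hg b').2, h])
        rw [this]
      · intro b hb
        exact ⟨g ⟨b, hb⟩, ⟨_, rfl⟩, (hg _).2⟩
  have hinj : Set.InjOn (fun g : B → α => Set.range g) (S : Set (B → α)) := by
    intro g hg g' hg' h
    rw [Finset.mem_coe, hS] at hg hg'
    funext b
    obtain ⟨b', hb'⟩ : g b ∈ Set.range g' := by
      rw [← show Set.range g = Set.range g' from h]; exact ⟨b, rfl⟩
    have : b' = b := Subtype.ext (by rw [← (hg' b').2, hb', (hg b).2])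
    rw [← hb', this]
  rw [himage, hinj.ncard_image, Set.ncard_coe_finset, Fintype.card_piFinset,
    prod_coe_sort B fun b => #{x ∈ L | f x = b}]

namespace PhyloTree

variable {V : Type} [Fintype V] [DecidableEq V] (T : PhyloTree V) {d : ℝ}

section Ancestry

lemma ne_root_of_step {a b : V} (h : T.step a b) : a ≠ T.root := by
  rintro rfl
  simp [step, T.parent_root] at h

lemma hgt_lt_of_step {a b : V} (h : T.step a b) : T.hgt b < T.hgt a := by
  linarith [T.hgt_eq a b h, T.len_pos a (T.ne_root_of_step h)]

lemma step_unique {a b b' : V} (h : T.step a b) (h' : T.step a b') : b = b' :=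
  Option.some.inj (h.symm.trans h')

lemma anc_refl (v : V) : T.anc v v := Relation.ReflTransGen.refl

lemma anc_trans {u v w : V} (h₁ : T.anc u v) (h₂ : T.anc v w) : T.anc u w := h₂.trans h₁

lemma anc_of_step {a b : V} (h : T.step a b) : T.anc b a := Relation.ReflTransGen.single h

lemma root_anc (v : V) : T.anc T.root v := T.reaches_root v

lemma exists_step_of_anc {u v : V} (h : T.anc u v) (hne : u ≠ v) :
    ∃ p, T.step v p ∧ T.anc u p := by
  rcases Relation.ReflTransGen.cases_head h with h | h
  · exact absurd h.symm hne
  · exact h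

lemma hgt_le_of_anc {u v : V} (h : T.anc u v) : T.hgt u ≤ T.hgt v := by
  induction h with
  | refl => rfl
  | tail _ hstep ih => exact (T.hgt_lt_of_step hstep).le.trans ih

lemma hgt_lt_of_anc {u v : V} (h : T.anc u v) (hne : u ≠ v) : T.hgt u < T.hgt v := by
  obtain ⟨p, hp, hup⟩ := T.exists_step_of_anc h hne
  exact (T.hgt_le_of_anc hup).trans_lt (T.hgt_lt_of_step hp)

lemma anc_antisymm {u v : V} (h₁ : T.anc u v) (h₂ : T.anc v u) : u = v := by
  by_contra hne
  exact (T.hgt_lt_of_anc h₁ hne).not_ge (T.hgt_le_of_anc h₂)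

lemma anc_total_of_anc {u v x : V} (hu : T.anc u x) (hv : T.anc v x) :
    T.anc u v ∨ T.anc v u := by
  induction hu using Relation.ReflTransGen.head_induction_on with
  | refl => exact Or.inr hv
  | head hstep hu ih =>
    rcases Relation.ReflTransGen.cases_head hv with rfl | ⟨p, hp, hv⟩
    · exact Or.inl (hu.head hstep)
    · exact ih (T.step_unique hp hstep ▸ hv)

lemma exists_isLeaf_anc (v : V) : ∃ x, T.IsLeaf x ∧ T.anc v x := by
  obtain ⟨x, hx, hmax⟩ := Finset.exists_max_image {u | T.anc v u} T.hgt
    ⟨v, by simpa using T.anc_refl v⟩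
  rw [Finset.mem_filter_univ] at hx
  refine ⟨x, fun u hu => ?_, hx⟩
  have := hmax u (by simpa using T.anc_trans hx (T.anc_of_step hu))
  exact this.not_gt (T.hgt_lt_of_step hu)

end Ancestry

section Cut

def IsTop (d : ℝ) (t : V) : Prop := t ∈ T.R d ∧ ∀ p, T.step t p → p ∉ T.R d

def tops (d : ℝ) : Finset V := {t | T.IsTop d t}

def topOf (d : ℝ) (v : V) : V := if h : ∃ t, T.IsTop d t ∧ T.anc t v then h.choose else v

lemma mem_tops {t : V} : t ∈ T.tops d ↔ T.IsTop d t := by simp [tops]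

lemma hgt_sub_le_of_mem_R (hU : T.Ultrametric) {t x : V} (ht : t ∈ T.R d) (hx : T.IsLeaf x) :
    T.hgt x - T.hgt t ≤ d := by
  obtain ⟨y, hy, -, hyt⟩ := ht
  rwa [hU x y hx hy]

lemma mem_R_of_anc (hU : T.Ultrametric) {t v : V} (ht : t ∈ T.R d) (h : T.anc t v) :
    v ∈ T.R d := by
  obtain ⟨x, hx, hvx⟩ := T.exists_isLeaf_anc v
  exact ⟨x, hx, hvx, by linarith [T.hgt_sub_le_of_mem_R hU ht hx, T.hgt_le_of_anc h]⟩

lemma mem_R_of_isLeaf (hd : 0 ≤ d) {x : V} (hx : T.IsLeaf x) : x ∈ T.R d :=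
  ⟨x, hx, T.anc_refl x, by simpa using hd⟩

lemma exists_isTop_anc {v : V} (hv : v ∈ T.R d) : ∃ t, T.IsTop d t ∧ T.anc t v := by
  obtain ⟨t, ht, hmin⟩ := Finset.exists_min_image {u | T.anc u v ∧ u ∈ T.R d} T.hgt
    ⟨v, by simpa using ⟨T.anc_refl v, hv⟩⟩
  rw [Finset.mem_filter_univ] at ht
  refine ⟨t, ⟨ht.2, fun p hp hpR => ?_⟩, ht.1⟩
  have := hmin p (by simpa using ⟨T.anc_trans (T.anc_of_step hp) ht.1, hpR⟩)
  exact this.not_gt (T.hgt_lt_of_step hp)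

variable {T} in
lemma IsTop.eq_of_anc (hU : T.Ultrametric) {t t' : V} (ht : T.IsTop d t) (ht' : T.IsTop d t')
    (h : T.anc t t') : t = t' := by
  by_contra hne
  obtain ⟨p, hp, htp⟩ := T.exists_step_of_anc h hne
  exact ht'.2 p hp (T.mem_R_of_anc hU ht.1 htp)

variable {T} in
lemma IsTop.eq_of_anc_of_anc (hU : T.Ultrametric) {t t' v : V} (ht : T.IsTop d t)
    (ht' : T.IsTop d t') (h : T.anc t v) (h' : T.anc t' v) : t = t' := by
  rcases T.anc_total_of_anc h h' with h | h
  · exact ht.eq_of_anc hU ht' h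
  · exact (ht'.eq_of_anc hU ht h).symm

lemma topOf_spec {v : V} (hv : v ∈ T.R d) :
    T.IsTop d (T.topOf d v) ∧ T.anc (T.topOf d v) v := by
  have h := T.exists_isTop_anc hv
  rw [topOf, dif_pos h]
  exact h.choose_spec

lemma topOf_eq (hU : T.Ultrametric) {t v : V} (ht : T.IsTop d t) (h : T.anc t v) :
    T.topOf d v = t :=
  have hv := T.topOf_spec (T.mem_R_of_anc hU ht.1 h)
  hv.1.eq_of_anc_of_anc hU ht hv.2 h

lemma topOf_mem_tops {v : V} (hv : v ∈ T.R d) : T.topOf d v ∈ T.tops d :=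
  T.mem_tops.2 (T.topOf_spec hv).1

lemma topOf_eq_of_step (hU : T.Ultrametric) {a b : V} (hb : b ∈ T.R d) (h : T.step a b) :
    T.topOf d a = T.topOf d b :=
  T.topOf_eq hU (T.topOf_spec hb).1 (T.anc_trans (T.topOf_spec hb).2 (T.anc_of_step h))

lemma mem_R_iff_exists_isTop (hU : T.Ultrametric) {v : V} :
    v ∈ T.R d ↔ ∃ t, T.IsTop d t ∧ T.anc t v :=
  ⟨T.exists_isTop_anc, fun ⟨_, ht, h⟩ => T.mem_R_of_anc hU ht.1 h⟩

end Cut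

section Components

instance (S : Set V) : Std.Symm (T.adjIn S) := ⟨fun _ _ ⟨hu, hv, h⟩ => ⟨hv, hu, h.symm⟩⟩

lemma reflTransGen_adjIn_of_anc (hU : T.Ultrametric) {t u : V} (ht : t ∈ T.R d)
    (h : T.anc t u) : Relation.ReflTransGen (T.adjIn (T.R d)) t u := by
  induction h using Relation.ReflTransGen.head_induction_on with
  | refl => rfl
  | head hstep hu ih =>
    exact ih.tail ⟨T.mem_R_of_anc hU ht hu, T.mem_R_of_anc hU ht (hu.head hstep), Or.inr hstep⟩

lemma topOf_eq_of_reflTransGen_adjIn (hU : T.Ultrametric) {u v : V}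
    (h : Relation.ReflTransGen (T.adjIn (T.R d)) v u) : T.topOf d u = T.topOf d v := by
  induction h with
  | refl => rfl
  | tail _ hadj ih =>
    obtain ⟨hb, hc, hbc | hcb⟩ := hadj
    · exact (T.topOf_eq_of_step hU hc hbc).symm.trans ih
    · exact (T.topOf_eq_of_step hU hb hcb).trans ih

lemma reflTransGen_adjIn_iff (hU : T.Ultrametric) {u v : V} (hv : v ∈ T.R d)
    (hu : u ∈ T.R d) :
    Relation.ReflTransGen (T.adjIn (T.R d)) v u ↔ T.topOf d u = T.topOf d v := by
  refine ⟨T.topOf_eq_of_reflTransGen_adjIn hU, fun h => ?_⟩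
  have hreach := fun {w} (hw : w ∈ T.R d) =>
    T.reflTransGen_adjIn_of_anc hU (T.topOf_spec hw).1.1 (T.topOf_spec hw).2
  exact (Std.Symm.symm _ _ (hreach hv)).trans (h ▸ hreach hu)

lemma components_R_eq (hU : T.Ultrametric) :
    T.components (T.R d) = (fun t => {u | u ∈ T.R d ∧ T.topOf d u = t}) '' T.tops d := by
  ext C
  constructor
  · rintro ⟨v, hv, rfl⟩
    refine ⟨T.topOf d v, T.topOf_mem_tops hv, ?_⟩
    ext u
    simp only [Set.mem_ofPred_eq, Set.mem_inter_iff]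
    exact and_congr_right fun hu => (T.reflTransGen_adjIn_iff hU hv hu).symm
  · rintro ⟨t, ht, rfl⟩
    have ht := T.mem_tops.1 ht
    refine ⟨t, ht.1, ?_⟩
    ext u
    simp only [Set.mem_ofPred_eq, Set.mem_inter_iff]
    refine and_congr_right fun hu => ?_
    rw [T.reflTransGen_adjIn_iff hU ht.1 hu, T.topOf_eq hU ht (T.anc_refl t)]

lemma ccount_eq_card_tops (hU : T.Ultrametric) (d : ℝ) : T.ccount d = #(T.tops d) := by
  rw [ccount, T.components_R_eq hU, Set.InjOn.ncard_image, Set.ncard_coe_finset]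
  intro t ht t' _ h
  have ht := T.mem_tops.1 ht
  have hself : T.topOf d t = t := T.topOf_eq hU ht (T.anc_refl t)
  exact hself.symm.trans ((Set.ext_iff.mp h t).mp ⟨ht.1, hself⟩).2

end Components

section Diversity

def lenSum (Q : V → Prop) : ℝ := ∑ v, if Q v then T.len v else 0

def Covers (Y : Set V) (v : V) : Prop := ∃ x ∈ Y, T.IsLeaf x ∧ T.anc v x

lemma PD_eq_lenSum (Y : Set V) : T.PD Y = T.lenSum fun v => v ≠ T.root ∧ T.Covers Y v :=
  sum_congr rfl fun _ _ => by congr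

lemma lenSum_congr {Q Q' : V → Prop} (h : ∀ v, Q v ↔ Q' v) : T.lenSum Q = T.lenSum Q' := by
  rw [show Q = Q' from funext fun v => propext (h v)]

lemma lenSum_false : T.lenSum (fun _ => False) = 0 := by simp [lenSum]

lemma lenSum_eq_len (w : V) : T.lenSum (· = w) = T.len w :=
  (sum_eq_single w (fun _ _ hv => if_neg hv) (by simp)).trans (if_pos rfl)

lemma lenSum_or {Q₁ Q₂ : V → Prop} (h : ∀ v, Q₁ v → ¬ Q₂ v) :
    T.lenSum (fun v => Q₁ v ∨ Q₂ v) = T.lenSum Q₁ + T.lenSum Q₂ := by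
  simp only [lenSum, ← sum_add_distrib]
  refine sum_congr rfl fun v _ => ?_
  by_cases h₁ : Q₁ v
  · simp [h₁, h v h₁]
  · simp [h₁]

lemma lenSum_eq_add_lenSum_and_not {Q Q' : V → Prop} (h : ∀ v, Q' v → Q v) :
    T.lenSum Q = T.lenSum Q' + T.lenSum (fun v => Q v ∧ ¬ Q' v) := by
  rw [← T.lenSum_or fun v h₁ h₂ => h₂.2 h₁]
  exact T.lenSum_congr fun v => by by_cases hv : Q' v <;> simp [hv, h v]

-- `T.len T.root` is unconstrained: the root has no incoming edge.
lemma lenSum_mono {Q Q' : V → Prop} (h : ∀ v, Q v → Q' v) (hroot : ∀ v, Q' v → v ≠ T.root) :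
    T.lenSum Q ≤ T.lenSum Q' := by
  refine sum_le_sum fun v _ => ?_
  by_cases hq' : Q' v
  · by_cases hq : Q v
    · simp [hq, hq']
    · simp [hq, hq', (T.len_pos v (hroot v hq')).le]
  · simp [hq', mt (h v) hq']

lemma lenSum_eq_sum {ι : Type*} (s : Finset ι) {Q : V → Prop} (P : ι → V → Prop)
    (hQ : ∀ v, Q v ↔ ∃ i ∈ s, P i v)
    (huniq : ∀ v, ∀ i ∈ s, ∀ j ∈ s, P i v → P j v → i = j) :
    T.lenSum Q = ∑ i ∈ s, T.lenSum (P i) := by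
  simp only [lenSum]
  rw [sum_comm]
  refine sum_congr rfl fun v _ => ?_
  by_cases hv : Q v
  · obtain ⟨i, hi, hPi⟩ := (hQ v).1 hv
    rw [if_pos hv, sum_eq_single_of_mem i hi fun j hj hji =>
      if_neg fun hPj => hji (huniq v j hj i hi hPj hPi), if_pos hPi]
  · rw [if_neg hv, sum_eq_zero fun i hi => if_neg fun hPi => hv ((hQ v).2 ⟨i, hi, hPi⟩)]

lemma ne_root_of_anc_of_ne {u v : V} (h : T.anc u v) (hne : v ≠ u) : v ≠ T.root := by
  rintro rfl
  exact hne (T.anc_antisymm (T.root_anc u) h)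

lemma lenSum_path {u w : V} (h : T.anc u w) :
    T.lenSum (fun v => T.anc u v ∧ T.anc v w ∧ v ≠ u) = T.hgt w - T.hgt u := by
  induction h using Relation.ReflTransGen.head_induction_on with
  | refl =>
    rw [sub_self, ← T.lenSum_false]
    exact T.lenSum_congr fun v => iff_false_intro fun ⟨h₁, h₂, hne⟩ => hne (T.anc_antisymm h₂ h₁)
  | @head a c hstep hc ih =>
    have hsplit : ∀ v, (T.anc u v ∧ T.anc v a ∧ v ≠ u) ↔
        (T.anc u v ∧ T.anc v c ∧ v ≠ u) ∨ v = a := by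
      intro v
      constructor
      · rintro ⟨huv, hva, hne⟩
        by_cases hv : v = a
        · exact Or.inr hv
        · obtain ⟨p, hp, hvp⟩ := T.exists_step_of_anc hva hv
          exact Or.inl ⟨huv, T.step_unique hp hstep ▸ hvp, hne⟩
      · rintro (⟨huv, hvc, hne⟩ | rfl)
        · exact ⟨huv, hvc.head hstep, hne⟩
        · refine ⟨hc.head hstep, T.anc_refl v, fun hvu => ?_⟩
          exact (T.hgt_lt_of_step hstep).not_ge (hvu ▸ T.hgt_le_of_anc hc)
    rw [T.lenSum_congr hsplit, T.lenSum_or, ih, T.lenSum_eq_len, T.hgt_eq a c hstep]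
    · ring
    · rintro v ⟨-, hvc, -⟩ rfl
      exact (T.hgt_lt_of_step hstep).not_ge (T.hgt_le_of_anc hvc)

lemma lenSum_closedPath {u w : V} (h : T.anc u w) :
    T.lenSum (fun v => v ≠ T.root ∧ T.anc u v ∧ T.anc v w) =
      T.hgt w - T.hgt u + if u = T.root then 0 else T.len u := by
  have hsplit : ∀ v, (v ≠ T.root ∧ T.anc u v ∧ T.anc v w) ↔
      (T.anc u v ∧ T.anc v w ∧ v ≠ u) ∨ (v = u ∧ u ≠ T.root) := by
    intro v
    constructor
    · rintro ⟨hv, huv, hvw⟩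
      by_cases hvu : v = u
      · exact Or.inr ⟨hvu, hvu ▸ hv⟩
      · exact Or.inl ⟨huv, hvw, hvu⟩
    · rintro (⟨huv, hvw, hvu⟩ | ⟨rfl, hv⟩)
      · exact ⟨T.ne_root_of_anc_of_ne huv hvu, huv, hvw⟩
      · exact ⟨hv, T.anc_refl v, h⟩
  rw [T.lenSum_congr hsplit, T.lenSum_or (fun v h₁ h₂ => h₁.2.2 h₂.1), T.lenSum_path h]
  congr 1
  by_cases hu : u = T.root
  · rw [if_pos hu, ← T.lenSum_false]
    exact T.lenSum_congr fun v => iff_false_intro fun h => h.2 hu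
  · rw [if_neg hu, ← T.lenSum_eq_len]
    exact T.lenSum_congr fun v => and_iff_left hu

end Diversity

section MaxPD

lemma anc_of_topOf_eq (hd : 0 ≤ d) {t x : V} (hx : T.IsLeaf x) (h : T.topOf d x = t) :
    T.anc t x :=
  h ▸ (T.topOf_spec (T.mem_R_of_isLeaf hd hx)).2

lemma PD_le_PD_sdiff_add (hU : T.Ultrametric) (hd : 0 ≤ d) {A : Set V} (hA : A ⊆ T.leaves)
    {a a' : V} (ha : a ∈ A) (ha' : a' ∈ A) (hne : a ≠ a') (htop : T.topOf d a = T.topOf d a') :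
    T.PD A ≤ T.PD (A \ {a'}) + d := by
  set t := T.topOf d a'
  have hta : T.anc t a := T.anc_of_topOf_eq hd (hA ha) htop
  have hta' : T.anc t a' := T.anc_of_topOf_eq hd (hA ha') rfl
  have hlost : ∀ v, (v ≠ T.root ∧ T.Covers A v) ∧ ¬ (v ≠ T.root ∧ T.Covers (A \ {a'}) v) →
      T.anc t v ∧ T.anc v a' ∧ v ≠ t := by
    rintro v ⟨⟨hvr, b, hb, hbl, hvb⟩, hv⟩
    obtain rfl : b = a' := by_contra fun hba' => hv ⟨hvr, b, ⟨hb, hba'⟩, hbl, hvb⟩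
    have hva : ¬ T.anc v a := fun hva => hv ⟨hvr, a, ⟨ha, hne⟩, hA ha, hva⟩
    refine ⟨(T.anc_total_of_anc hvb hta').resolve_left fun hvt => hva (T.anc_trans hvt hta),
      hvb, ?_⟩
    rintro rfl
    exact hva hta
  have hloss := T.lenSum_mono hlost fun v hv => T.ne_root_of_anc_of_ne hv.1 hv.2.2
  rw [T.lenSum_path hta'] at hloss
  have hsub : ∀ v, v ≠ T.root ∧ T.Covers (A \ {a'}) v → v ≠ T.root ∧ T.Covers A v :=
    fun v ⟨hv, b, hb, hbl, hvb⟩ => ⟨hv, b, hb.1, hbl, hvb⟩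
  rw [PD_eq_lenSum, PD_eq_lenSum, T.lenSum_eq_add_lenSum_and_not hsub]
  linarith [T.hgt_sub_le_of_mem_R hU (T.topOf_spec (T.mem_R_of_isLeaf hd (hA ha'))).1.1 (hA ha')]

lemma PD_add_lt_PD_insert {A : Set V} {t x : V} (ht : T.IsTop d t) (hroot : t ≠ T.root)
    (hA : ∀ a ∈ A, ¬ T.anc t a) (hx : T.IsLeaf x) (htx : T.anc t x) :
    T.PD A + d < T.PD (insert x A) := by
  obtain ⟨p, hp⟩ := Option.isSome_iff_exists.mp (T.parent_isSome t hroot)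
  have hgain : d < T.hgt x - T.hgt p := by
    by_contra! hle
    exact ht.2 p hp ⟨x, hx, T.anc_trans (T.anc_of_step hp) htx, hle⟩
  have hdisj : ∀ v, v ≠ T.root ∧ T.Covers A v → ¬ (v ≠ T.root ∧ T.anc t v ∧ T.anc v x) :=
    fun v ⟨_, b, hb, _, hvb⟩ ⟨_, htv, _⟩ => hA b hb (T.anc_trans htv hvb)
  have hle := T.lenSum_mono (Q := fun v => (v ≠ T.root ∧ T.Covers A v) ∨
      (v ≠ T.root ∧ T.anc t v ∧ T.anc v x)) (Q' := fun v => v ≠ T.root ∧ T.Covers (insert x A) v)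
    (by
      rintro v (⟨hv, b, hb, hbl, hvb⟩ | ⟨hv, -, hvx⟩)
      · exact ⟨hv, b, Set.mem_insert_of_mem x hb, hbl, hvb⟩
      · exact ⟨hv, x, Set.mem_insert x A, hx, hvx⟩)
    fun v hv => hv.1
  rw [T.lenSum_or hdisj, T.lenSum_closedPath htx, if_neg hroot, ← PD_eq_lenSum,
    ← PD_eq_lenSum] at hle
  linarith [T.hgt_eq t p hp]

lemma PD_eq_lenSum_add_sum_tops (hU : T.Ultrametric) (Y : Set V) :
    T.PD Y = T.lenSum (fun v => v ≠ T.root ∧ v ∉ T.R d ∧ T.Covers Y v) +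
      ∑ t ∈ T.tops d, T.lenSum fun v => v ≠ T.root ∧ T.anc t v ∧ T.Covers Y v := by
  have hsplit : ∀ v, (v ≠ T.root ∧ T.Covers Y v) ↔
      (v ≠ T.root ∧ v ∉ T.R d ∧ T.Covers Y v) ∨ (v ∈ T.R d ∧ v ≠ T.root ∧ T.Covers Y v) := by
    intro v
    by_cases hv : v ∈ T.R d <;> simp [hv]
  rw [PD_eq_lenSum, T.lenSum_congr hsplit, T.lenSum_or fun v h₁ h₂ => h₁.2.1 h₂.1]
  congr 1
  refine T.lenSum_eq_sum _ _ (fun v => ?_) fun v t ht t' ht' h h' => ?_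
  · simp only [T.mem_R_iff_exists_isTop hU, mem_tops]
    constructor
    · rintro ⟨⟨t, ht, htv⟩, hv⟩
      exact ⟨t, ht, hv.1, htv, hv.2⟩
    · rintro ⟨t, ht, hv, htv, hcov⟩
      exact ⟨⟨t, ht, htv⟩, hv, hcov⟩
  · exact (T.mem_tops.1 ht).eq_of_anc_of_anc hU (T.mem_tops.1 ht') h.2.1 h'.2.1

lemma covers_of_notMem_R (hU : T.Ultrametric) (hd : 0 ≤ d) {Y : Set V} (hY : Y ⊆ T.leaves)
    (hsurj : Set.SurjOn (T.topOf d) Y (T.tops d)) {v : V} (hv : v ∉ T.R d) : T.Covers Y v := by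
  obtain ⟨x, hx, hvx⟩ := T.exists_isLeaf_anc v
  have hxR := T.mem_R_of_isLeaf hd hx
  have hvt : T.anc v (T.topOf d x) := (T.anc_total_of_anc hvx (T.topOf_spec hxR).2).resolve_right
    fun htv => hv (T.mem_R_of_anc hU (T.topOf_spec hxR).1.1 htv)
  obtain ⟨a, ha, hat⟩ := hsurj (T.topOf_mem_tops hxR)
  exact ⟨a, ha, hY ha, T.anc_trans hvt (T.anc_of_topOf_eq hd (hY ha) hat)⟩

lemma lenSum_covers_of_injOn (hU : T.Ultrametric) {Y : Set V}
    (hY : Y ⊆ T.leaves) (hinj : Set.InjOn (T.topOf d) Y) {t a : V} (ht : T.IsTop d t)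
    (ha : a ∈ Y) (hta : T.anc t a) :
    T.lenSum (fun v => v ≠ T.root ∧ T.anc t v ∧ T.Covers Y v) =
      T.hgt a - T.hgt t + if t = T.root then 0 else T.len t := by
  rw [← T.lenSum_closedPath hta]
  refine T.lenSum_congr fun v => and_congr_right fun _ => and_congr_right fun htv => ?_
  constructor
  · rintro ⟨b, hb, -, hvb⟩
    have hab : T.topOf d b = T.topOf d a := by
      rw [T.topOf_eq hU ht (T.anc_trans htv hvb), T.topOf_eq hU ht hta]
    exact hinj hb ha hab ▸ hvb
  · exact fun hva => ⟨a, ha, hY ha, hva⟩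

lemma PD_eq_of_bijOn (hU : T.Ultrametric) (hd : 0 ≤ d) {Y Y' : Set V} (hY : Y ⊆ T.leaves)
    (hY' : Y' ⊆ T.leaves) (hb : Set.BijOn (T.topOf d) Y (T.tops d))
    (hb' : Set.BijOn (T.topOf d) Y' (T.tops d)) : T.PD Y = T.PD Y' := by
  rw [T.PD_eq_lenSum_add_sum_tops hU, T.PD_eq_lenSum_add_sum_tops hU]
  congr 1
  · exact T.lenSum_congr fun v => and_congr_right fun _ => and_congr_right fun hv =>
      iff_of_true (T.covers_of_notMem_R hU hd hY hb.surjOn hv)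
        (T.covers_of_notMem_R hU hd hY' hb'.surjOn hv)
  · refine sum_congr rfl fun t ht => ?_
    obtain ⟨a, ha, rfl⟩ := hb.surjOn ht
    obtain ⟨a', ha', hat⟩ := hb'.surjOn ht
    have htop := T.mem_tops.1 ht
    rw [T.lenSum_covers_of_injOn hU hY hb.injOn htop ha (T.anc_of_topOf_eq hd (hY ha) rfl),
      T.lenSum_covers_of_injOn hU hY' hb'.injOn htop ha' (T.anc_of_topOf_eq hd (hY' ha') hat),
      hU a a' (hY ha) (hY' ha')]

lemma exists_isMaxPD {k : ℕ} {Y : Set V} (hY : Y ⊆ T.leaves) (hYk : Y.ncard = k) :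
    ∃ M, T.IsMaxPD k M := by
  obtain ⟨M, ⟨hM, hMk⟩, hmax⟩ := Set.exists_max_image {Z : Set V | Z ⊆ T.leaves ∧ Z.ncard = k}
    T.PD (Set.toFinite _) ⟨Y, hY, hYk⟩
  exact ⟨M, hM, hMk, fun Z hZ hZk => hmax Z ⟨hZ, hZk⟩⟩

lemma bijOn_topOf_of_isMaxPD (hU : T.Ultrametric) (hd : 0 ≤ d) {k : ℕ} (hk : #(T.tops d) = k)
    {A : Set V} (hA : T.IsMaxPD k A) : Set.BijOn (T.topOf d) A (T.tops d) := by
  obtain ⟨hAL, hAk, hmax⟩ := hA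
  have hmaps : Set.MapsTo (T.topOf d) A (T.tops d) :=
    fun a ha => T.topOf_mem_tops (T.mem_R_of_isLeaf hd (hAL ha))
  have hiff := Set.injOn_iff_surjOn_of_ncard_eq (Set.toFinite A) (Set.toFinite _) hmaps
    (by rw [hAk, Set.ncard_coe_finset, hk])
  by_contra hbij
  have hinj : ¬ Set.InjOn (T.topOf d) A := fun h => hbij ⟨hmaps, h, hiff.1 h⟩
  obtain ⟨a, ha, a', ha', htop, hne⟩ : ∃ a ∈ A, ∃ a' ∈ A, T.topOf d a = T.topOf d a' ∧ a ≠ a' := by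
    simpa [Set.InjOn] using hinj
  obtain ⟨t, ht, hnot⟩ := Set.not_subset.mp (mt hiff.2 hinj)
  have ht := T.mem_tops.1 ht
  have hempty : ∀ b ∈ A, ¬ T.anc t b := fun b hb htb => hnot ⟨b, hb, T.topOf_eq hU ht htb⟩
  have hroot : t ≠ T.root := fun h => hempty a ha (h ▸ T.root_anc a)
  obtain ⟨x, hx, htx⟩ := T.exists_isLeaf_anc t
  have hxA : x ∉ A := fun hxA => hempty x hxA htx
  have hlt : T.PD A < T.PD (insert x (A \ {a'})) :=
    (T.PD_le_PD_sdiff_add hU hd hAL ha ha' hne htop).trans_lt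
      (T.PD_add_lt_PD_insert ht hroot (fun b hb => hempty b hb.1) hx htx)
  refine hlt.not_ge (hmax _ (Set.insert_subset hx (Set.sdiff_subset.trans hAL)) ?_)
  rw [Set.ncard_exchange hxA ha', hAk]

lemma isMaxPD_iff (hU : T.Ultrametric) (hd : 0 ≤ d) {k : ℕ} (hk : #(T.tops d) = k)
    {A : Set V} : T.IsMaxPD k A ↔ A ⊆ T.leaves ∧ Set.BijOn (T.topOf d) A (T.tops d) := by
  refine ⟨fun hA => ⟨hA.1, T.bijOn_topOf_of_isMaxPD hU hd hk hA⟩, fun ⟨hAL, hA⟩ => ?_⟩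
  have hAk : A.ncard = k := by rw [hA.ncard_eq, Set.ncard_coe_finset, hk]
  obtain ⟨M, hM⟩ := T.exists_isMaxPD hAL hAk
  refine ⟨hAL, hAk, fun Y hY hYk => ?_⟩
  rw [T.PD_eq_of_bijOn hU hd hAL hM.1 hA (T.bijOn_topOf_of_isMaxPD hU hd hk hM)]
  exact hM.2.2 Y hY hYk

end MaxPD

section Count

def cluster (d : ℝ) (t : V) : Finset V := {x ∈ T.leaves.toFinset | T.topOf d x = t}

lemma m_eq_prod_card_cluster (hU : T.Ultrametric) (hd : 0 ≤ d) {k : ℕ}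
    (hk : #(T.tops d) = k) : T.m k = ∏ t ∈ T.tops d, #(T.cluster d t) := by
  refine (congrArg Set.ncard (Set.ext fun A => ?_)).trans
    (Set.ncard_setOf_bijOn (T.topOf d) T.leaves.toFinset (T.tops d))
  rw [Set.mem_ofPred_eq, T.isMaxPD_iff hU hd hk, Set.coe_toFinset]
  rfl

lemma sum_card_cluster (hd : 0 ≤ d) : ∑ t ∈ T.tops d, #(T.cluster d t) = T.leaves.ncard := by
  have hmaps : ∀ x ∈ T.leaves.toFinset, T.topOf d x ∈ T.tops d :=
    fun x hx => T.topOf_mem_tops (T.mem_R_of_isLeaf hd (Set.mem_toFinset.mp hx))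
  rw [Set.ncard_eq_toFinset_card', card_eq_sum_card_fiberwise hmaps]
  rfl

lemma one_le_card_cluster (hU : T.Ultrametric) {t : V} (ht : t ∈ T.tops d) :
    1 ≤ #(T.cluster d t) := by
  have ht := T.mem_tops.1 ht
  obtain ⟨x, hx, htx⟩ := T.exists_isLeaf_anc t
  exact card_pos.mpr ⟨x, by simpa [cluster] using ⟨hx, T.topOf_eq hU ht htx⟩⟩

end Count

end PhyloTree

theorem m_bounds_at_branching_value_general
    {V : Type} [Fintype V] [DecidableEq V] (T : PhyloTree V)
    (hU : T.Ultrametric) (n k : ℕ)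
    (hn : n = T.leaves.ncard) (hbv : T.IsBranchingValue k) :
    n - k + 1 ≤ T.m k ∧ (T.m k : ℝ) ≤ ((n : ℝ) / (k : ℝ)) ^ k := by
  obtain ⟨d, hd, hdk⟩ := hbv
  have hk : #(T.tops d) = k := (T.ccount_eq_card_tops hU d).symm.trans hdk
  have hm := T.m_eq_prod_card_cluster hU hd hk
  have hsum := T.sum_card_cluster hd
  have hpos := fun t (ht : t ∈ T.tops d) => T.one_le_card_cluster hU ht
  constructor
  · have hlower := sum_add_one_le_prod_add_card _ _ hpos
    have hm_pos := one_le_prod' hpos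
    rw [hsum, ← hn, ← hm, hk] at hlower
    rw [← hm] at hm_pos
    omega
  · have hupper := Real.prod_le_sum_div_card_pow (T.tops d) (fun t => (#(T.cluster d t) : ℝ))
      fun _ _ => Nat.cast_nonneg _
    rw [← Nat.cast_sum, hsum, ← hn, hk, ← Nat.cast_prod, ← hm] at hupper
    exact hupper

/-- Proposition 2 of the paper.  For a rooted *binary*
ultrametric phylogenetic tree on `n` leaves and a branching value `k`,
`n − k + 1 ≤ m(T,k) ≤ (n/k)^k`. -/
theorem m_bounds_at_branching_value
    {V : Type} [Fintype V] [DecidableEq V] (T : PhyloTree V)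
    (hU : T.Ultrametric) (hB : T.Binary) (n k : ℕ)
    (hn : n = T.leaves.ncard) (hk : 1 ≤ k) (hbv : T.IsBranchingValue k) :
    n - k + 1 ≤ T.m k ∧ (T.m k : ℝ) ≤ ((n : ℝ) / (k : ℝ)) ^ k :=
  m_bounds_at_branching_value_general T hU n k hn hbv
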